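/- arXiv:1505.01590 — 5 statements merged into one kernel-verified Lean document; each statement's English description precedes it below -/
import Mathlib

section
/- In any group, for elements t, b and any integer n ≥ 3, the identity t^{n-1} b^{n-1} (t⁻¹b⁻¹)^{n-2} b⁻¹ t⁻¹ = [t⁻¹, b^{-(n-1)}]^{t^{-(n-2)}} · ⋯ · [t⁻¹, b^{-3}]^{t^{-2}} · [t⁻¹, b^{-2}]^{t^{-1}} holds. -/
lemma claim2_aux {G : Type*} [Group G] (t b : G) : ∀ m : ℕ,
    t ^ (m + 2) * b ^ (m + 2) * (t⁻¹ * b⁻¹) ^ (m + 1) * b⁻¹ * t⁻¹ =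
      ((List.range (m + 1)).map (fun k =>
        ((t ^ (m + 1 - k))⁻¹)⁻¹ *
          (t⁻¹⁻¹ * ((b ^ (m + 2 - k))⁻¹)⁻¹ * t⁻¹ * (b ^ (m + 2 - k))⁻¹) *
          (t ^ (m + 1 - k))⁻¹)).prod := by
  intro m
  induction m with
  | zero =>
    simp only [List.range_succ, List.range_zero, List.nil_append, List.map_cons,
      List.map_nil, List.prod_cons, List.prod_nil, Nat.sub_zero, mul_one]
    group
  | succ m ih =>
    rw [List.range_succ_eq_map]
    simp only [List.map_cons, List.prod_cons, List.map_map]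
    have hmap : ((fun k =>
        ((t ^ (m + 1 + 1 - k))⁻¹)⁻¹ *
          (t⁻¹⁻¹ * ((b ^ (m + 1 + 2 - k))⁻¹)⁻¹ * t⁻¹ * (b ^ (m + 1 + 2 - k))⁻¹) *
          (t ^ (m + 1 + 1 - k))⁻¹) ∘ Nat.succ) = (fun k =>
        ((t ^ (m + 1 - k))⁻¹)⁻¹ *
          (t⁻¹⁻¹ * ((b ^ (m + 2 - k))⁻¹)⁻¹ * t⁻¹ * (b ^ (m + 2 - k))⁻¹) *
          (t ^ (m + 1 - k))⁻¹) := by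
      funext k
      have h1 : m + 1 + 1 - Nat.succ k = m + 1 - k := by omega
      have h2 : m + 1 + 2 - Nat.succ k = m + 2 - k := by omega
      simp [h1, h2]
    rw [hmap, ← ih]
    simp only [Nat.sub_zero]
    rw [pow_succ' (t⁻¹ * b⁻¹) (m + 1)]
    generalize (t⁻¹ * b⁻¹) ^ (m + 1) = X
    group

theorem claim2 {G : Type*} [Group G] (t b : G) (n : ℕ) (hn : 3 ≤ n) :
    t ^ (n - 1) * b ^ (n - 1) * (t⁻¹ * b⁻¹) ^ (n - 2) * b⁻¹ * t⁻¹ =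
      ((List.range (n - 2)).map (fun k =>
        ((t ^ (n - 2 - k))⁻¹)⁻¹ *
          (t⁻¹⁻¹ * ((b ^ (n - 1 - k))⁻¹)⁻¹ * t⁻¹ * (b ^ (n - 1 - k))⁻¹) *
          (t ^ (n - 2 - k))⁻¹)).prod := by
  obtain ⟨m, rfl⟩ : ∃ m, n = m + 3 := ⟨n - 3, by omega⟩
  have h1 : m + 3 - 1 = m + 2 := by omega
  have h2 : m + 3 - 2 = m + 1 := by omega
  rw [h1, h2]
  exact claim2_aux t b m
end

section
/- In any group, for elements t, b and any integer n ≥ 3, the identity t^{-(n-1)} b^{-(n-1)} (tb)^{n-2} b t = [t, b^{n-1}]^{t^{n-2}} · ⋯ · [t, b³]^{t²} · [t, b²]^{t} holds. -/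
theorem claim4_aux {G : Type*} [Group G] (t b : G) (m : ℕ) :
    (t ^ (m + 2))⁻¹ * (b ^ (m + 2))⁻¹ * (t * b) ^ (m + 1) * b * t =
      ((List.range (m + 1)).map (fun k =>
        (t ^ (m + 1 - k))⁻¹ *
          (t⁻¹ * (b ^ (m + 2 - k))⁻¹ * t * b ^ (m + 2 - k)) *
          t ^ (m + 1 - k))).prod := by
  induction m with
  | zero =>
    simp only [List.range_succ, List.range_zero, List.nil_append, List.map_cons,
      List.map_nil, List.prod_cons, List.prod_nil, mul_one]
    group
    rw [zpow_two]
    group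
  | succ m ih =>
    rw [List.range_succ_eq_map, List.map_cons, List.prod_cons, List.map_map]
    have : ((fun k =>
        (t ^ (m + 1 + 1 - k))⁻¹ *
          (t⁻¹ * (b ^ (m + 1 + 2 - k))⁻¹ * t * b ^ (m + 1 + 2 - k)) *
          t ^ (m + 1 + 1 - k)) ∘ Nat.succ) = (fun k =>
        (t ^ (m + 1 - k))⁻¹ *
          (t⁻¹ * (b ^ (m + 2 - k))⁻¹ * t * b ^ (m + 2 - k)) *
          t ^ (m + 1 - k)) := by
      funext k
      simp [Nat.succ_sub_succ]
    rw [this, ← ih]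
    simp only [Nat.sub_zero]
    have h1 : (t * b) ^ (m + 1 + 1) = (t * b) * (t * b) ^ (m + 1) := by
      rw [pow_succ']
    rw [h1]
    generalize (t * b) ^ (m + 1) = c
    have h2 : b ^ (m + 1 + 2) = b * b ^ (m + 2) := (pow_succ' b (m+2))
    have h3 : t ^ (m + 1 + 2) = t * t ^ (m + 2) := (pow_succ' t (m+2))
    have h4 : t ^ (m + 1 + 1) = t * t ^ (m + 1) := (pow_succ' t (m+1))
    rw [h2, h3]
    group

theorem claim4 {G : Type*} [Group G] (t b : G) (n : ℕ) (hn : 3 ≤ n) :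
    (t ^ (n - 1))⁻¹ * (b ^ (n - 1))⁻¹ * (t * b) ^ (n - 2) * b * t =
      ((List.range (n - 2)).map (fun k =>
        (t ^ (n - 2 - k))⁻¹ *
          (t⁻¹ * (b ^ (n - 1 - k))⁻¹ * t * b ^ (n - 1 - k)) *
          t ^ (n - 2 - k))).prod := by
  obtain ⟨m, rfl⟩ : ∃ m, n = m + 3 := ⟨n - 3, by omega⟩
  have e1 : m + 3 - 1 = m + 2 := rfl
  have e2 : m + 3 - 2 = m + 1 := rfl
  simp only [e1, e2, Nat.add_sub_cancel]
  exact claim4_aux t b m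
end

section
/- Let G be a group generated by elements t, b satisfying the relation t b^n t⁻¹ = b^{n-1} t⁻¹ b^{-n} t b^n for some integer n ≥ 1, and let D = [t,b]. Then b^n belongs to the subsemigroup ⟨D⟩ of G generated by all conjugates of D. -/
/-!
Let `S` be the subsemigroup generated by the conjugates of `D`; it is closed under conjugation,
and contains `⁅t, b ^ n⁆ = t b^n t⁻¹ b^{-n}` and `⁅b, t^{-k}⁆` for `k ≥ 1`. The relation says
exactly that `e := ⁅t, b ^ n⁆` satisfies `b e = t⁻¹ e t`. Writing `eₖ = t^{-k} e t^k`, this gives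
`b eₖ = ⁅b, t^{-k}⁆ eₖ₊₁`, so `b^m eₖ₊₁ ∈ S` by induction on `m`, and `b^n e = b^{n-1} e₁ ∈ S`.
Since `b^n e` is a conjugate of `b^n`, the claim follows.
-/

open scoped commutatorElement

section ConjSemigroupClosure

variable {G : Type*} [Group G]

def conjSemigroupClosure (d : G) : Subsemigroup G :=
  Subsemigroup.closure {x : G | ∃ g : G, x = g⁻¹ * d * g}

theorem conj_mem_conjSemigroupClosure (d g : G) : g⁻¹ * d * g ∈ conjSemigroupClosure d :=
  Subsemigroup.subset_closure ⟨g, rfl⟩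

theorem mem_conjSemigroupClosure_self (d : G) : d ∈ conjSemigroupClosure d := by
  simpa using conj_mem_conjSemigroupClosure d 1

theorem conj_mem_conjSemigroupClosure_of_mem {d s : G} (hs : s ∈ conjSemigroupClosure d)
    (g : G) : g⁻¹ * s * g ∈ conjSemigroupClosure d := by
  induction hs using Subsemigroup.closure_induction with
  | mem x hx =>
    obtain ⟨h, rfl⟩ := hx
    simpa only [mul_inv_rev, mul_assoc] using conj_mem_conjSemigroupClosure d (h * g)
  | mul x y _ _ hx hy =>
    simpa only [mul_assoc, mul_inv_cancel_left] using mul_mem hx hy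

theorem conj_mem_conjSemigroupClosure_iff {d s : G} (g : G) :
    g⁻¹ * s * g ∈ conjSemigroupClosure d ↔ s ∈ conjSemigroupClosure d := by
  refine ⟨fun hs => ?_, fun hs => conj_mem_conjSemigroupClosure_of_mem hs g⟩
  simpa only [inv_inv, mul_assoc, mul_inv_cancel, mul_one, mul_inv_cancel_left] using
    conj_mem_conjSemigroupClosure_of_mem hs g⁻¹

theorem conj_mem_conjSemigroupClosure_iff' {d s : G} (g : G) :
    g * s * g⁻¹ ∈ conjSemigroupClosure d ↔ s ∈ conjSemigroupClosure d := by
  simpa only [inv_inv] using conj_mem_conjSemigroupClosure_iff (d := d) (s := s) g⁻¹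

theorem conjSemigroupClosure_le_of_mem {c d : G} (hc : c ∈ conjSemigroupClosure d) :
    conjSemigroupClosure c ≤ conjSemigroupClosure d :=
  Subsemigroup.closure_le.mpr fun _ ⟨g, hx⟩ => hx ▸ conj_mem_conjSemigroupClosure_of_mem hc g

theorem commutatorElement_pow_succ_mem (x y : G) (m : ℕ) :
    ⁅x, y ^ (m + 1)⁆ ∈ conjSemigroupClosure ⁅x, y⁆ := by
  induction m with
  | zero => simpa using mem_conjSemigroupClosure_self ⁅x, y⁆
  | succ m ih =>
    have h : ⁅x, y ^ (m + 2)⁆ = ⁅x, y ^ (m + 1)⁆ * (y ^ (m + 1) * ⁅x, y⁆ * (y ^ (m + 1))⁻¹) := by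
      simp only [commutatorElement_def, pow_succ]; group
    rw [h]
    exact mul_mem ih ((conj_mem_conjSemigroupClosure_iff' _).mpr (mem_conjSemigroupClosure_self _))

theorem pow_mul_mem_of_mul_eq_conj {d b t e : G} (hrel : b * e = t⁻¹ * e * t)
    (he : e ∈ conjSemigroupClosure d) (hbt : ⁅b, t⁻¹⁆ ∈ conjSemigroupClosure d) (m : ℕ) :
    b ^ m * e ∈ conjSemigroupClosure d := by
  have step (k : ℕ) : b * ((t ^ (k + 1))⁻¹ * e * t ^ (k + 1)) =
      ⁅b, t⁻¹ ^ (k + 1)⁆ * ((t ^ (k + 2))⁻¹ * e * t ^ (k + 2)) := by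
    calc b * ((t ^ (k + 1))⁻¹ * e * t ^ (k + 1))
        = ⁅b, t⁻¹ ^ (k + 1)⁆ * (t ^ (k + 1))⁻¹ * (b * e) * t ^ (k + 1) := by
          simp only [commutatorElement_def, inv_pow, inv_inv]; group
      _ = ⁅b, t⁻¹ ^ (k + 1)⁆ * ((t ^ (k + 2))⁻¹ * e * t ^ (k + 2)) := by
          rw [hrel, pow_succ t (k + 1)]; group
  have hw (k : ℕ) : ⁅b, t⁻¹ ^ (k + 1)⁆ ∈ conjSemigroupClosure d :=
    conjSemigroupClosure_le_of_mem hbt (commutatorElement_pow_succ_mem b t⁻¹ k)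
  have key (m : ℕ) :
      ∀ k : ℕ, b ^ m * ((t ^ (k + 1))⁻¹ * e * t ^ (k + 1)) ∈ conjSemigroupClosure d := by
    induction m with
    | zero => intro k; simpa using conj_mem_conjSemigroupClosure_of_mem he _
    | succ m ih =>
      intro k
      have h : b ^ (m + 1) * ((t ^ (k + 1))⁻¹ * e * t ^ (k + 1)) =
          b ^ m * ⁅b, t⁻¹ ^ (k + 1)⁆ * (b ^ m)⁻¹ *
            (b ^ m * ((t ^ (k + 2))⁻¹ * e * t ^ (k + 2))) := by
        rw [pow_succ, mul_assoc, step k]; group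
      rw [h]
      exact mul_mem ((conj_mem_conjSemigroupClosure_iff' _).mpr (hw k)) (ih (k + 1))
  cases m with
  | zero => simpa using he
  | succ m => simpa [pow_succ, mul_assoc, hrel] using key m 0

end ConjSemigroupClosure

theorem pow_mem_conj_semigroup_general {G : Type*} [Group G] (t b : G)
    (n : ℕ) (hn : 1 ≤ n)
    (h : t * b ^ n * t⁻¹ = b ^ (n - 1) * t⁻¹ * (b ^ n)⁻¹ * t * b ^ n) :
    b ^ n ∈ Subsemigroup.closure {x : G | ∃ g : G, x = g⁻¹ * (t⁻¹ * b⁻¹ * t * b) * g} := by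
  obtain ⟨m, rfl⟩ : ∃ m, n = m + 1 := ⟨n - 1, by omega⟩
  rw [Nat.add_sub_cancel] at h
  change b ^ (m + 1) ∈ conjSemigroupClosure (t⁻¹ * b⁻¹ * t * b)
  have htb : ⁅t, b⁆ ∈ conjSemigroupClosure (t⁻¹ * b⁻¹ * t * b) := by
    convert conj_mem_conjSemigroupClosure _ (t * b)⁻¹ using 1
    simp only [commutatorElement_def]; group
  have hbt : ⁅b, t⁻¹⁆ ∈ conjSemigroupClosure (t⁻¹ * b⁻¹ * t * b) := by
    convert conj_mem_conjSemigroupClosure _ b⁻¹ using 1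
    simp only [commutatorElement_def]; group
  have he := conjSemigroupClosure_le_of_mem htb (commutatorElement_pow_succ_mem t b m)
  have hrel : b * ⁅t, b ^ (m + 1)⁆ = t⁻¹ * ⁅t, b ^ (m + 1)⁆ * t := by
    calc b * ⁅t, b ^ (m + 1)⁆ = b * (t * b ^ (m + 1) * t⁻¹) * (b ^ (m + 1))⁻¹ := by
          rw [commutatorElement_def]; group
      _ = t⁻¹ * ⁅t, b ^ (m + 1)⁆ * t := by
          rw [h, commutatorElement_def, pow_succ' b m]; group
  have hbe := pow_mul_mem_of_mul_eq_conj hrel he hbt (m + 1)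
  convert (conj_mem_conjSemigroupClosure_iff (b ^ (m + 1) * t)).mpr hbe using 1
  rw [commutatorElement_def]; group

theorem pow_mem_conj_semigroup {G : Type*} [Group G] (t b : G)
    (hgen : Subgroup.closure ({t, b} : Set G) = ⊤) (n : ℕ) (hn : 1 ≤ n)
    (h : t * b ^ n * t⁻¹ = b ^ (n - 1) * t⁻¹ * (b ^ n)⁻¹ * t * b ^ n) :
    b ^ n ∈ Subsemigroup.closure {x : G | ∃ g : G, x = g⁻¹ * (t⁻¹ * b⁻¹ * t * b) * g} :=
  pow_mem_conj_semigroup_general t b n hn h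
end

section
/- Let G be a group with elements t, b satisfying t b^n t⁻¹ = b^{n-1} t⁻¹ b^{-n} t b^n for some integer n ≥ 1, and let D = [t,b]. Then b^{-n} belongs to the subsemigroup ⟨D⟩ generated by all conjugates of D. -/
namespace ConjSemiAux

variable {G : Type*} [Group G]

/-- The set of conjugates of the commutator `D = t⁻¹ b⁻¹ t b`. -/
def gen (t b : G) : Set G := {x : G | ∃ g : G, x = g⁻¹ * (t⁻¹ * b⁻¹ * t * b) * g}

/-- The subsemigroup generated by all conjugates of `D`. -/
def S (t b : G) : Subsemigroup G := Subsemigroup.closure (gen t b)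

/-- The submonoid generated by all conjugates of `D`. -/
def T (t b : G) : Submonoid G := Submonoid.closure (gen t b)

lemma gen_conj {t b x : G} (hx : x ∈ gen t b) (g : G) : g⁻¹ * x * g ∈ gen t b := by
  obtain ⟨g', rfl⟩ := hx
  exact ⟨g' * g, by group⟩

lemma S_conj {t b x : G} (hx : x ∈ S t b) (g : G) : g⁻¹ * x * g ∈ S t b := by
  induction hx using Subsemigroup.closure_induction with
  | mem y hy => exact Subsemigroup.subset_closure (gen_conj hy g)
  | mul y z _ _ hy hz =>
    have key : g⁻¹ * (y * z) * g = (g⁻¹ * y * g) * (g⁻¹ * z * g) := by group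
    rw [key]; exact mul_mem hy hz

lemma T_conj {t b x : G} (hx : x ∈ T t b) (g : G) : g⁻¹ * x * g ∈ T t b := by
  induction hx using Submonoid.closure_induction with
  | mem y hy => exact Submonoid.subset_closure (gen_conj hy g)
  | one => simpa using one_mem (T t b)
  | mul y z _ _ hy hz =>
    have key : g⁻¹ * (y * z) * g = (g⁻¹ * y * g) * (g⁻¹ * z * g) := by group
    rw [key]; exact mul_mem hy hz

lemma S_le_T {t b x : G} (hx : x ∈ S t b) : x ∈ T t b := by
  induction hx using Subsemigroup.closure_induction with
  | mem y hy => exact Submonoid.subset_closure hy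
  | mul y z _ _ hy hz => exact mul_mem hy hz

lemma T_cases {t b s : G} (hs : s ∈ T t b) : s = 1 ∨ s ∈ S t b := by
  induction hs using Submonoid.closure_induction with
  | mem y hy => exact Or.inr (Subsemigroup.subset_closure hy)
  | one => exact Or.inl rfl
  | mul y z _ _ hy hz =>
    rcases hy with rfl | hy
    · simpa using hz
    · rcases hz with rfl | hz
      · simpa using Or.inr hy
      · exact Or.inr (mul_mem hy hz)

lemma T_mul_S {t b s x : G} (hs : s ∈ T t b) (hx : x ∈ S t b) : s * x ∈ S t b := by
  rcases T_cases hs with rfl | hs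
  · simpa using hx
  · exact mul_mem hs hx

/-- `e j` is `t^(j-1) b t^(1-j)`, a conjugate of `b` by a power of `t`. -/
def e (t b : G) (j : ℤ) : G := t ^ (j - 1) * b * t ^ (1 - j)

lemma e_pow (t b : G) (j : ℤ) : ∀ k : ℕ, e t b j ^ k = t ^ (j - 1) * b ^ k * t ^ (1 - j)
  | 0 => by simp only [pow_zero, mul_one]; group
  | (k+1) => by rw [pow_succ, e_pow t b j k]; unfold e; group

lemma e_step (t b : G) (i : ℤ) : (e t b i)⁻¹ * e t b (i + 1) ∈ S t b := by
  have key : (e t b i)⁻¹ * e t b (i + 1) = (t ^ (-i))⁻¹ * (t⁻¹ * b⁻¹ * t * b) * t ^ (-i) := by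
    unfold e; group
  rw [key]
  exact Subsemigroup.subset_closure ⟨t ^ (-i), rfl⟩

lemma e_chain (t b : G) (i : ℤ) : ∀ k : ℕ, (e t b i)⁻¹ * e t b (i + k + 1) ∈ S t b
  | 0 => by simpa using e_step t b i
  | (k+1) => by
    have key : (e t b i)⁻¹ * e t b (i + ((k+1 : ℕ) : ℤ) + 1) =
        ((e t b i)⁻¹ * e t b (i + k + 1)) *
          ((e t b (i + k + 1))⁻¹ * e t b ((i + k + 1) + 1)) := by
      rw [show (i + ((k+1 : ℕ) : ℤ) + 1) = ((i + k + 1) + 1) by push_cast; ring]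
      group
    rw [key]
    exact mul_mem (e_chain t b i k) (e_step t b (i + k + 1))

/-- Matched powers `e_i⁻ᵏ e_jᵏ` for `i < j` lie in the monoid `T`. -/
lemma e_pair (t b : G) (i : ℤ) (d : ℕ) :
    ∀ k : ℕ, (e t b i ^ k)⁻¹ * e t b (i + d + 1) ^ k ∈ T t b
  | 0 => by simpa using one_mem (T t b)
  | (k+1) => by
    have key : (e t b i ^ (k+1))⁻¹ * e t b (i + d + 1) ^ (k+1) =
        ((e t b i ^ k)⁻¹ * ((e t b i)⁻¹ * e t b (i + d + 1)) * (e t b i ^ k)) *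
          ((e t b i ^ k)⁻¹ * e t b (i + d + 1) ^ k) := by
      group
    rw [key]
    exact mul_mem (T_conj (S_le_T (e_chain t b i d)) _) (e_pair t b i d k)

end ConjSemiAux

open ConjSemiAux in
theorem inv_pow_mem_conj_semigroup {G : Type*} [Group G] (t b : G) (n : ℕ) (hn : 1 ≤ n)
    (h : t * b ^ n * t⁻¹ = b ^ (n - 1) * t⁻¹ * (b ^ n)⁻¹ * t * b ^ n) :
    (b ^ n)⁻¹ ∈ Subsemigroup.closure {x : G | ∃ g : G, x = g⁻¹ * (t⁻¹ * b⁻¹ * t * b) * g} := by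
  obtain ⟨m, rfl⟩ : ∃ m, n = m + 1 := ⟨n - 1, by omega⟩
  simp only [Nat.add_sub_cancel] at h
  show (b ^ (m+1))⁻¹ ∈ S t b
  -- the conjugated relation, in terms of the `e j`
  have hrel : ∀ j : ℤ, e t b (j+2) ^ (m+1) =
      e t b (j+1) ^ m * (e t b j ^ (m+1))⁻¹ * e t b (j+1) ^ (m+1) := by
    intro j
    rw [e_pow, e_pow, e_pow, e_pow]
    have k1 : t ^ (j + 2 - 1) * b ^ (m+1) * t ^ (1 - (j+2)) =
        t ^ j * (t * b ^ (m+1) * t⁻¹) * t ^ (-j) := by group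
    have k2 : t ^ (j+1-1) * b ^ m * t ^ (1-(j+1)) * (t ^ (j-1) * b ^ (m+1) * t ^ (1-j))⁻¹ *
          (t ^ (j+1-1) * b ^ (m+1) * t ^ (1-(j+1)))
        = t ^ j * (b ^ m * t⁻¹ * (b ^ (m+1))⁻¹ * t * b ^ (m+1)) * t ^ (-j) := by group
    rw [k1, k2, h]
  -- the relation rearranged
  have hR : ∀ j : ℤ, e t b (j+1) ^ (m+1) =
      e t b j ^ (m+1) * (e t b (j+1) ^ m)⁻¹ * e t b (j+2) ^ (m+1) := by
    intro j
    rw [hrel j]; group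
  -- main unfolding induction
  have ST : ∀ k : ℕ, k ≤ m → ∃ s ∈ T t b,
      (e t b 2 ^ (2*m+1))⁻¹ * e t b 3 ^ (m+1) =
        s * (e t b 2 ^ (m - k))⁻¹ * ((e t b ((k:ℤ)+3) ^ m)⁻¹ * e t b ((k:ℤ)+4) ^ (m+1)) := by
    intro k
    induction k with
    | zero =>
      intro _
      refine ⟨1, one_mem _, ?_⟩
      simp only [Nat.cast_zero, zero_add, Nat.sub_zero]
      rw [show (4:ℤ) = 2+2 by norm_num, show (3:ℤ) = 2+1 by norm_num, hR 2]
      group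
    | succ k ih =>
      intro hk
      obtain ⟨s, hs, hM⟩ := ih (by omega)
      rw [show ((k:ℤ)+4) = ((k:ℤ)+3) + 1 by ring, hR ((k:ℤ)+3),
        show m - k = (m - (k+1)) + 1 by omega] at hM
      have g1 : (((k+1:ℕ)):ℤ) + 3 = ((k:ℤ)+3)+1 := by push_cast; ring
      have g2 : (((k+1:ℕ)):ℤ) + 4 = ((k:ℤ)+3)+2 := by push_cast; ring
      simp only [g1, g2]
      have hq : (e t b 2)⁻¹ * e t b ((k:ℤ)+3) ∈ S t b := by
        have hc := e_chain t b 2 k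
        rwa [show (2:ℤ) + (k:ℤ) + 1 = (k:ℤ)+3 by ring] at hc
      refine ⟨s * ((e t b 2 ^ (m-(k+1)))⁻¹ * ((e t b 2)⁻¹ * e t b ((k:ℤ)+3))
          * e t b 2 ^ (m-(k+1))),
        mul_mem hs (T_conj (S_le_T hq) _), ?_⟩
      rw [hM]; group
  -- membership of the core element
  have hMmem : (e t b 2 ^ (2*m+1))⁻¹ * e t b 3 ^ (m+1) ∈ S t b := by
    rcases Nat.eq_zero_or_pos m with rfl | hm
    · have h0 := e_chain t b 2 0
      rw [show (2:ℤ) + ((0:ℕ):ℤ) + 1 = 3 by norm_num] at h0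
      simpa using h0
    · obtain ⟨m', rfl⟩ : ∃ m', m = m' + 1 := ⟨m - 1, by omega⟩
      obtain ⟨s, hs, hM⟩ := ST m' (by omega)
      rw [show m' + 1 - m' = 1 by omega] at hM
      have hτ : (e t b ((m':ℤ)+3) ^ (m'+1))⁻¹ * e t b ((m':ℤ)+4) ^ (m'+1) ∈ T t b := by
        have hp := e_pair t b ((m':ℤ)+3) 0 (m'+1)
        rwa [show ((m':ℤ)+3) + ((0:ℕ):ℤ) + 1 = (m':ℤ)+4 by push_cast; ring] at hp
      have hχ : (e t b 2)⁻¹ * e t b ((m':ℤ)+4) ∈ S t b := by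
        have hc := e_chain t b 2 (m'+1)
        rwa [show (2:ℤ) + (((m'+1):ℕ):ℤ) + 1 = (m':ℤ)+4 by push_cast; ring] at hc
      have key : (e t b 2 ^ (2*(m'+1)+1))⁻¹ * e t b 3 ^ (m'+1+1) =
          (s * ((e t b 2)⁻¹ * ((e t b ((m':ℤ)+3) ^ (m'+1))⁻¹ * e t b ((m':ℤ)+4) ^ (m'+1))
            * e t b 2)) * ((e t b 2)⁻¹ * e t b ((m':ℤ)+4)) := by
        rw [hM]; group
      rw [key]
      exact T_mul_S (mul_mem hs (T_conj hτ _)) hχ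
  -- conclude
  have hA : (b ^ (m+1))⁻¹ = ((e t b 2 ^ (m+1))⁻¹)⁻¹ *
      ((e t b 2 ^ (2*m+1))⁻¹ * e t b 3 ^ (m+1)) * ((e t b 2 ^ (m+1))⁻¹) := by
    have h1 : e t b 1 = b := by simp [e]
    rw [show (3:ℤ) = 1+2 by norm_num, hrel 1, show (1:ℤ)+1 = 2 by norm_num, h1]
    group
  rw [hA]
  exact S_conj hMmem ((e t b 2 ^ (m+1))⁻¹)
end

section
/- Let G be a group with elements t, b satisfying t b^n t⁻¹ = b^{n-1} t⁻¹ b^{-n} t b^n for some integer n ≥ 1, and suppose D = [t,b] ≠ 1. Then D is a generalized torsion element of G: some nonempty finite product of conjugates of D equals the identity. -/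
namespace GTaux
variable {G : Type*} [Group G]

def P1 (t b x : G) : Prop :=
  ∃ l : List G, l ≠ [] ∧ (l.map (fun g => g⁻¹ * (t⁻¹ * b⁻¹ * t * b) * g)).prod = x

theorem conj_map_prod (t b w : G) (l : List G) :
    ((l.map (· * w)).map (fun g => g⁻¹ * (t⁻¹ * b⁻¹ * t * b) * g)).prod =
      w⁻¹ * ((l.map (fun g => g⁻¹ * (t⁻¹ * b⁻¹ * t * b) * g)).prod) * w := by
  induction l with
  | nil => simp
  | cons a l ih =>
    simp only [List.map_cons, List.prod_cons]
    rw [ih]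
    group

theorem P1.conj {t b x : G} (hx : P1 t b x) (w : G) : P1 t b (w⁻¹ * x * w) := by
  obtain ⟨l, hne, hp⟩ := hx
  exact ⟨l.map (· * w), by simpa using hne, by rw [conj_map_prod, hp]⟩

theorem P1.mul {t b x y : G} (hx : P1 t b x) (hy : P1 t b y) : P1 t b (x * y) := by
  obtain ⟨lx, hne, hpx⟩ := hx
  obtain ⟨ly, hne', hpy⟩ := hy
  exact ⟨lx ++ ly, by simp [hne], by simp [List.prod_append, hpx, hpy]⟩

theorem P1.atom' (t b g : G) : P1 t b (g⁻¹ * (t⁻¹ * b⁻¹ * t * b) * g) :=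
  ⟨[g], by simp, by simp⟩

def Bk (t b : G) (k : ℤ) : G := t ^ (-k) * b * t ^ k

theorem Bk_pow (t b : G) (k : ℤ) (m : ℕ) : (Bk t b k) ^ m = t ^ (-k) * b ^ m * t ^ k := by
  induction m with
  | zero => simp [Bk]
  | succ m ih =>
    rw [pow_succ, ih, Bk]
    group

theorem star (t b : G) (n : ℕ)
    (h : t * b ^ n * t⁻¹ = b ^ (n - 1) * t⁻¹ * (b ^ n)⁻¹ * t * b ^ n) (k : ℤ) :
    Bk t b (k-1) ^ n = Bk t b k ^ (n-1) * (Bk t b (k+1) ^ n)⁻¹ * Bk t b k ^ n := by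
  rw [Bk_pow, Bk_pow, Bk_pow, Bk_pow]
  calc t ^ (-(k-1)) * b ^ n * t ^ (k-1)
      = t ^ (-k) * (t * b ^ n * t⁻¹) * t ^ k := by group
    _ = t ^ (-k) * (b ^ (n-1) * t⁻¹ * (b ^ n)⁻¹ * t * b ^ n) * t ^ k := by rw [h]
    _ = (t ^ (-k) * b ^ (n-1) * t ^ k) * (t ^ (-(k+1)) * b ^ n * t ^ (k+1))⁻¹ *
        (t ^ (-k) * b ^ n * t ^ k) := by group

theorem atom_pair_eq (t b : G) (k : ℤ) :
    Bk t b k * (Bk t b (k+1))⁻¹ =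
      (b⁻¹ * t ^ k)⁻¹ * (t⁻¹ * b⁻¹ * t * b) * (b⁻¹ * t ^ k) := by
  simp only [Bk]
  group

theorem pair_atom (t b : G) (k : ℤ) : P1 t b (Bk t b k * (Bk t b (k+1))⁻¹) := by
  rw [atom_pair_eq]
  exact P1.atom' t b _

theorem pairA1 (t b : G) (k : ℤ) : ∀ E : ℕ,
    P1 t b (Bk t b k ^ (E+1) * (Bk t b (k+1) ^ (E+1))⁻¹) := by
  intro E
  induction E with
  | zero => simpa using pair_atom t b k
  | succ E ih =>
    have key : Bk t b k ^ (E+2) * (Bk t b (k+1) ^ (E+2))⁻¹ =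
        ((Bk t b k ^ (E+1))⁻¹)⁻¹ * (Bk t b k * (Bk t b (k+1))⁻¹) * (Bk t b k ^ (E+1))⁻¹ *
          (Bk t b k ^ (E+1) * (Bk t b (k+1) ^ (E+1))⁻¹) := by
      have e1 : Bk t b k ^ (E+2) = Bk t b k ^ (E+1) * Bk t b k := by rw [← pow_succ]
      have e2 : Bk t b (k+1) ^ (E+2) = Bk t b (k+1) ^ (E+1) * Bk t b (k+1) := by rw [← pow_succ]
      rw [e1, e2]
      generalize Bk t b k ^ (E+1) = X
      generalize Bk t b (k+1) ^ (E+1) = Y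
      group
    rw [key]
    exact ((pair_atom t b k).conj _).mul ih

def P0 (t b x : G) : Prop := x = 1 ∨ P1 t b x

theorem P1.ofEq {t b x y : G} (hx : P1 t b x) (e : x = y) : P1 t b y := e ▸ hx
theorem P0.ofEq {t b x y : G} (hx : P0 t b x) (e : x = y) : P0 t b y := e ▸ hx

theorem P0.mulP1 {t b x y : G} (hx : P0 t b x) (hy : P1 t b y) : P1 t b (x * y) := by
  rcases hx with rfl | hx
  · simpa using hy
  · exact hx.mul hy

theorem P1.mulP0 {t b x y : G} (hx : P1 t b x) (hy : P0 t b y) : P1 t b (x * y) := by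
  rcases hy with rfl | hy
  · simpa using hx
  · exact hx.mul hy

theorem P0.mul {t b x y : G} (hx : P0 t b x) (hy : P0 t b y) : P0 t b (x * y) := by
  rcases hx with rfl | hx
  · simpa using hy
  · exact Or.inr (hx.mulP0 hy)

theorem pairA0 (t b : G) (k : ℤ) (E : ℕ) :
    P0 t b (Bk t b k ^ E * (Bk t b (k+1) ^ E)⁻¹) := by
  cases E with
  | zero => left; simp
  | succ E => exact Or.inr (pairA1 t b k E)

theorem pairA1_rev (t b : G) (k : ℤ) (E : ℕ) :
    P1 t b ((Bk t b (k+1) ^ (E+1))⁻¹ * Bk t b k ^ (E+1)) := by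
  have := (pairA1 t b k E).conj (Bk t b k ^ (E+1))
  refine this.ofEq ?_
  generalize Bk t b k ^ (E+1) = X
  generalize Bk t b (k+1) ^ (E+1) = Y
  group

theorem pairA0_rev (t b : G) (k : ℤ) (E : ℕ) :
    P0 t b ((Bk t b (k+1) ^ E)⁻¹ * Bk t b k ^ E) := by
  cases E with
  | zero => left; simp
  | succ E => exact Or.inr (pairA1_rev t b k E)

theorem up (t b : G) (n : ℕ) (hn : 1 ≤ n)
    (h : t * b ^ n * t⁻¹ = b ^ (n - 1) * t⁻¹ * (b ^ n)⁻¹ * t * b ^ n) :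
    ∀ j : ℕ, j ≤ n → ∃ p, P0 t b p ∧
      Bk t b 2 ^ n = p * (Bk t b ((j:ℤ)+3) ^ j)⁻¹ * Bk t b ((j:ℤ)+2) ^ n := by
  intro j
  induction j with
  | zero =>
    intro _
    refine ⟨1, Or.inl rfl, ?_⟩
    norm_num
  | succ j ih =>
    intro hj
    obtain ⟨p, hp, heq⟩ := ih (Nat.le_of_succ_le hj)
    have hstar := star t b n h ((j:ℤ)+3)
    rw [show ((j:ℤ)+3) - 1 = (j:ℤ)+2 by ring, show ((j:ℤ)+3) + 1 = (j:ℤ)+4 by ring] at hstar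
    have s1 : Bk t b ((j:ℤ)+3) ^ (n-1) = Bk t b ((j:ℤ)+3) ^ j * Bk t b ((j:ℤ)+3) ^ (n-1-j) := by
      rw [← pow_add]; congr 1; omega
    have s2 : Bk t b ((j:ℤ)+4) ^ n = Bk t b ((j:ℤ)+4) ^ (j+1) * Bk t b ((j:ℤ)+4) ^ (n-1-j) := by
      rw [← pow_add]; congr 1; omega
    have keyeq : (Bk t b ((j:ℤ)+3) ^ j)⁻¹ * Bk t b ((j:ℤ)+2) ^ n =
        (Bk t b ((j:ℤ)+3) ^ (n-1-j) * (Bk t b ((j:ℤ)+4) ^ (n-1-j))⁻¹) *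
          ((Bk t b ((j:ℤ)+4) ^ (j+1))⁻¹ * Bk t b ((j:ℤ)+3) ^ n) := by
      rw [hstar, s1, s2]
      generalize Bk t b ((j:ℤ)+3) ^ j = A
      generalize Bk t b ((j:ℤ)+3) ^ (n-1-j) = C
      generalize Bk t b ((j:ℤ)+3) ^ n = X
      generalize Bk t b ((j:ℤ)+4) ^ (j+1) = N
      generalize Bk t b ((j:ℤ)+4) ^ (n-1-j) = M
      group
    have hpair := pairA0 t b ((j:ℤ)+3) (n-1-j)
    rw [show ((j:ℤ)+3) + 1 = (j:ℤ)+4 by ring] at hpair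
    refine ⟨p * (Bk t b ((j:ℤ)+3) ^ (n-1-j) * (Bk t b ((j:ℤ)+4) ^ (n-1-j))⁻¹),
      hp.mul hpair, ?_⟩
    rw [show ((j+1:ℕ):ℤ) + 3 = (j:ℤ)+4 by push_cast; ring,
        show ((j+1:ℕ):ℤ) + 2 = (j:ℤ)+3 by push_cast; ring]
    rw [heq, mul_assoc, keyeq]
    simp only [mul_assoc]

theorem down (t b : G) (n : ℕ) (hn : 1 ≤ n)
    (h : t * b ^ n * t⁻¹ = b ^ (n - 1) * t⁻¹ * (b ^ n)⁻¹ * t * b ^ n) :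
    ∀ j : ℕ, j ≤ n → ∃ p, P0 t b p ∧
      (Bk t b 2 ^ n)⁻¹ = p * Bk t b (1-(j:ℤ)) ^ j * (Bk t b (2-(j:ℤ)) ^ n)⁻¹ := by
  intro j
  induction j with
  | zero =>
    intro _
    refine ⟨1, Or.inl rfl, ?_⟩
    norm_num
  | succ j ih =>
    intro hj
    obtain ⟨p, hp, heq⟩ := ih (Nat.le_of_succ_le hj)
    have hstar := star t b n h (1-(j:ℤ))
    rw [show (1-(j:ℤ)) - 1 = -(j:ℤ) by ring, show (1-(j:ℤ)) + 1 = 2-(j:ℤ) by ring] at hstar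
    have hsolve : (Bk t b (2-(j:ℤ)) ^ n)⁻¹ =
        (Bk t b (1-(j:ℤ)) ^ (n-1))⁻¹ * Bk t b (-(j:ℤ)) ^ n * (Bk t b (1-(j:ℤ)) ^ n)⁻¹ := by
      rw [hstar]; group
    have s1 : Bk t b (1-(j:ℤ)) ^ (n-1) = Bk t b (1-(j:ℤ)) ^ (n-1-j) * Bk t b (1-(j:ℤ)) ^ j := by
      rw [← pow_add]; congr 1; omega
    have s2 : Bk t b (-(j:ℤ)) ^ n = Bk t b (-(j:ℤ)) ^ (n-1-j) * Bk t b (-(j:ℤ)) ^ (j+1) := by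
      rw [← pow_add]; congr 1; omega
    have keyeq : Bk t b (1-(j:ℤ)) ^ j * (Bk t b (2-(j:ℤ)) ^ n)⁻¹ =
        ((Bk t b (1-(j:ℤ)) ^ (n-1-j))⁻¹ * Bk t b (-(j:ℤ)) ^ (n-1-j)) *
          (Bk t b (-(j:ℤ)) ^ (j+1) * (Bk t b (1-(j:ℤ)) ^ n)⁻¹) := by
      rw [hsolve, s1, s2]
      generalize Bk t b (1-(j:ℤ)) ^ j = A
      generalize Bk t b (1-(j:ℤ)) ^ (n-1-j) = C
      generalize Bk t b (1-(j:ℤ)) ^ n = X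
      generalize Bk t b (-(j:ℤ)) ^ (n-1-j) = M
      generalize Bk t b (-(j:ℤ)) ^ (j+1) = N
      group
    have hpair := pairA0_rev t b (-(j:ℤ)) (n-1-j)
    rw [show -(j:ℤ) + 1 = 1-(j:ℤ) by ring] at hpair
    refine ⟨p * ((Bk t b (1-(j:ℤ)) ^ (n-1-j))⁻¹ * Bk t b (-(j:ℤ)) ^ (n-1-j)),
      hp.mul hpair, ?_⟩
    rw [show 1 - ((j+1:ℕ):ℤ) = -(j:ℤ) by push_cast; ring,
        show 2 - ((j+1:ℕ):ℤ) = 1-(j:ℤ) by push_cast; ring]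
    rw [heq, mul_assoc, keyeq]
    simp only [mul_assoc]

end GTaux

theorem D_is_generalized_torsion {G : Type*} [Group G] (t b : G) (n : ℕ) (hn : 1 ≤ n)
    (h : t * b ^ n * t⁻¹ = b ^ (n - 1) * t⁻¹ * (b ^ n)⁻¹ * t * b ^ n)
    (hD : t⁻¹ * b⁻¹ * t * b ≠ 1) :
    ∃ l : List G, l ≠ [] ∧
      (l.map (fun g => g⁻¹ * (t⁻¹ * b⁻¹ * t * b) * g)).prod = 1 := by
  classical
  obtain ⟨p, hp, hup⟩ := GTaux.up t b n hn h n le_rfl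
  obtain ⟨q, hq, hdown⟩ := GTaux.down t b n hn h n le_rfl
  have htail1 := GTaux.pairA1_rev t b ((n:ℤ)+2) (n-1)
  rw [show ((n:ℤ)+2) + 1 = (n:ℤ)+3 by ring, show n-1+1 = n by omega] at htail1
  have htail2 := GTaux.pairA1 t b (1-(n:ℤ)) (n-1)
  rw [show (1-(n:ℤ)) + 1 = 2-(n:ℤ) by ring, show n-1+1 = n by omega] at htail2
  have h1 : GTaux.P1 t b (GTaux.Bk t b 2 ^ n) := by
    refine (hp.mulP1 htail1).ofEq ?_
    rw [hup]; simp only [mul_assoc]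
  have h2 : GTaux.P1 t b ((GTaux.Bk t b 2 ^ n)⁻¹) := by
    refine (hq.mulP1 htail2).ofEq ?_
    rw [hdown]; simp only [mul_assoc]
  have hfin : GTaux.P1 t b 1 := by
    refine (h1.mul h2).ofEq ?_
    group
  obtain ⟨l, hne, hprod⟩ := hfin
  exact ⟨l, hne, hprod⟩
end
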